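/- arXiv:2210.10749 — 2 statements merged into one kernel-verified Lean document; each statement's English description precedes it below -/
import Mathlib

section
/- Consider the 1D gridworld semiautomaton with states Q = {0,1,…,S}, inputs σ̃ ∈ {−1,+1}, and transitions q_t = min(S, max(0, q_{t−1} + σ̃_t)). Let z_t := Σ_{i≤t} σ̃_i be the (unclamped) prefix sums, let t_uniq be the maximal index such that {z_τ : t_uniq ≤ τ ≤ T} contains exactly S+1 distinct values (assume such an index exists), and let t_min (resp. t_max) be the last index τ ≥ t_uniq achieving the minimum (resp. maximum) of z over [t_uniq, T]. Then: if t_min > t_max the state satisfies q_{t_min} = 0, and otherwise q_{t_max} = S. -/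
/-!
While the prefix sums `z` stay below `c + S`, the clamped state never falls behind `z - c`, since
the upper wall only cuts an increment above `z - c`; symmetrically, while `z` stays above `c`, the
state never rises above `z - c`. As `z` takes `S + 1` distinct integer values on `[t_uniq, T]`,
`z t_max - z t_min ≥ S`. If `t_min ≤ t_max`, tracking `z - (z t_max - S)` from `t_min` gives
`q t_max ≥ S`; otherwise tracking `z - z t_min` from `t_max` gives `q t_min ≤ 0`.
-/

/-- The state sequence of a semiautomaton: `q_t = δ(q_{t-1}, σ_t)`. -/
def stateSeq {Q A : Type*} (δ : Q → A → Q) (q0 : Q) (σ : ℕ → A) : ℕ → Q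
  | 0 => q0
  | t + 1 => δ (stateSeq δ q0 σ t) (σ (t + 1))

abbrev gridStep (S : ℤ) : ℤ → ℤ → ℤ := fun p s => min S (max 0 (p + s))

section GridWorld

variable {S q0 : ℤ} {σ : ℕ → ℤ}

theorem stateSeq_gridStep_mem_Icc (hS : 0 ≤ S) (hq0 : q0 ∈ Set.Icc 0 S) :
    ∀ t, stateSeq (gridStep S) q0 σ t ∈ Set.Icc 0 S
  | 0 => hq0
  | t + 1 => by
    simp only [stateSeq, gridStep, Set.mem_Icc]
    omega

theorem le_stateSeq_gridStep {w : ℕ → ℤ} (hw : ∀ t, w (t + 1) = w t + σ (t + 1)) {a b : ℕ}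
    (hab : a ≤ b) (ha : w a ≤ stateSeq (gridStep S) q0 σ a)
    (hwS : ∀ t ∈ Finset.Icc a b, w t ≤ S) : w b ≤ stateSeq (gridStep S) q0 σ b := by
  induction b, hab using Nat.le_induction with
  | base => exact ha
  | succ b hab ih =>
    have hb := ih fun t ht => hwS t (Finset.Icc_subset_Icc_right b.le_succ ht)
    have hb1 := hwS (b + 1) (Finset.mem_Icc.mpr ⟨hab.trans b.le_succ, le_rfl⟩)
    simp only [stateSeq, gridStep, hw] at hb1 ⊢
    omega

theorem stateSeq_gridStep_le {w : ℕ → ℤ} (hw : ∀ t, w (t + 1) = w t + σ (t + 1)) {a b : ℕ}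
    (hab : a ≤ b) (ha : stateSeq (gridStep S) q0 σ a ≤ w a)
    (hw0 : ∀ t ∈ Finset.Icc a b, 0 ≤ w t) : stateSeq (gridStep S) q0 σ b ≤ w b := by
  induction b, hab using Nat.le_induction with
  | base => exact ha
  | succ b hab ih =>
    have hb := ih fun t ht => hw0 t (Finset.Icc_subset_Icc_right b.le_succ ht)
    have hb1 := hw0 (b + 1) (Finset.mem_Icc.mpr ⟨hab.trans b.le_succ, le_rfl⟩)
    simp only [stateSeq, gridStep, hw] at hb1 ⊢
    omega

end GridWorld

theorem card_image_le_toNat_of_mapsTo {s : Finset ℕ} {f : ℕ → ℤ} {m M : ℤ}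
    (hf : ∀ x ∈ s, f x ∈ Finset.Icc m M) : (s.image f).card ≤ (M + 1 - m).toNat := by
  rw [← Int.card_Icc]
  exact Finset.card_le_card (by simpa only [Finset.image_subset_iff] using hf)

theorem gridworld_boundary_detection_general (S : ℕ)
    (σ : ℕ → ℤ)
    (q0 : ℤ) (hq0 : 0 ≤ q0 ∧ q0 ≤ S)
    (T : ℕ)
    -- the unclamped prefix sums
    (z : ℕ → ℤ) (hz : ∀ t, z t = ∑ i ∈ Finset.range t, σ (i + 1))
    -- the clamped gridworld state sequence
    (q : ℕ → ℤ) (hq : ∀ t, q t = stateSeq (fun p s => min (S : ℤ) (max 0 (p + s))) q0 σ t)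
    -- t_uniq : maximal index such that z takes exactly S+1 distinct values on [t_uniq, T]
    (tuniq : ℕ)
    (huniq : ((Finset.Icc tuniq T).image z).card = S + 1)
    -- t_min : last index in [t_uniq, T] achieving the minimum of z
    (tmin : ℕ) (htmin : tmin ∈ Finset.Icc tuniq T)
    (hmin : ∀ τ ∈ Finset.Icc tuniq T, z tmin ≤ z τ)
    -- t_max : last index in [t_uniq, T] achieving the maximum of z
    (tmax : ℕ) (htmax : tmax ∈ Finset.Icc tuniq T)
    (hmax : ∀ τ ∈ Finset.Icc tuniq T, z τ ≤ z tmax) :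
    (tmax < tmin → q tmin = 0) ∧ (¬ tmax < tmin → q tmax = S) := by
  have hzstep (c : ℤ) (t : ℕ) : z (t + 1) - c = z t - c + σ (t + 1) := by
    rw [hz, hz, Finset.sum_range_succ]
    ring
  have hspan : (S : ℤ) ≤ z tmax - z tmin := by
    have := card_image_le_toNat_of_mapsTo fun τ hτ => Finset.mem_Icc.mpr ⟨hmin τ hτ, hmax τ hτ⟩
    omega
  have hbound := stateSeq_gridStep_mem_Icc (σ := σ) (Int.natCast_nonneg S) hq0
  have hsub (a b : ℕ) (ha : a ∈ Finset.Icc tuniq T) (hb : b ∈ Finset.Icc tuniq T) :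
      ∀ t ∈ Finset.Icc a b, t ∈ Finset.Icc tuniq T := fun t ht =>
    Finset.Icc_subset_Icc (Finset.mem_Icc.mp ha).1 (Finset.mem_Icc.mp hb).2 ht
  refine ⟨fun hlt => ?_, fun hle => ?_⟩
  · have hstart : stateSeq (gridStep S) q0 σ tmax ≤ z tmax - z tmin := (hbound tmax).2.trans hspan
    have := stateSeq_gridStep_le (w := (z · - z tmin)) (hzstep _) hlt.le hstart
      fun t ht => sub_nonneg.mpr (hmin t (hsub tmax tmin htmax htmin t ht))
    rw [hq]
    exact le_antisymm (by simpa using this) (hbound tmin).1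
  · have hstart : z tmin - (z tmax - S) ≤ stateSeq (gridStep S) q0 σ tmin := by
      linarith [(hbound tmin).1]
    have := le_stateSeq_gridStep (w := (z · - (z tmax - S))) (hzstep _) (not_lt.mp hle) hstart
      fun t ht => by linarith [hmax t (hsub tmin tmax htmin htmax t ht)]
    rw [hq]
    exact le_antisymm (hbound tmax).2 (by simpa using this)

theorem gridworld_boundary_detection (S : ℕ) (hS : 1 ≤ S)
    (σ : ℕ → ℤ) (hσ : ∀ i, σ i = 1 ∨ σ i = -1)
    (q0 : ℤ) (hq0 : 0 ≤ q0 ∧ q0 ≤ S)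
    (T : ℕ)
    -- the unclamped prefix sums
    (z : ℕ → ℤ) (hz : ∀ t, z t = ∑ i ∈ Finset.range t, σ (i + 1))
    -- the clamped gridworld state sequence
    (q : ℕ → ℤ) (hq : ∀ t, q t = stateSeq (fun p s => min (S : ℤ) (max 0 (p + s))) q0 σ t)
    -- t_uniq : maximal index such that z takes exactly S+1 distinct values on [t_uniq, T]
    (tuniq : ℕ) (htuT : tuniq ≤ T)
    (huniq : ((Finset.Icc tuniq T).image z).card = S + 1)
    (hmaxuniq : ∀ t', tuniq < t' → t' ≤ T →
      ((Finset.Icc t' T).image z).card ≠ S + 1)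
    -- t_min : last index in [t_uniq, T] achieving the minimum of z
    (tmin : ℕ) (htmin : tmin ∈ Finset.Icc tuniq T)
    (hmin : ∀ τ ∈ Finset.Icc tuniq T, z tmin ≤ z τ)
    (hminlast : ∀ τ ∈ Finset.Icc tuniq T, z τ = z tmin → τ ≤ tmin)
    -- t_max : last index in [t_uniq, T] achieving the maximum of z
    (tmax : ℕ) (htmax : tmax ∈ Finset.Icc tuniq T)
    (hmax : ∀ τ ∈ Finset.Icc tuniq T, z τ ≤ z tmax)
    (hmaxlast : ∀ τ ∈ Finset.Icc tuniq T, z τ = z tmax → τ ≤ tmax) :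
    (tmax < tmin → q tmin = 0) ∧ (¬ tmax < tmin → q tmax = S) :=
  gridworld_boundary_detection_general S σ q0 hq0 T z hz q hq tuniq huniq tmin htmin hmin tmax htmax
    hmax
end

section
/- Let f : X → ℝ^d be any function on a finite set X ⊆ ℝ with |x − x'| ≥ Δ > 0 for all distinct x, x' ∈ X. Then there exists a two-layer ReLU network g(x) = W₂·ReLU(W₁x + b₁) with hidden width 4|X| such that g(x + ξ) = f(x) for every x ∈ X and every perturbation |ξ| ≤ Δ/4. -/
/-!
Four ReLU units `t ↦ max (t + s) 0` with shifts `s = Δ/2, Δ/4, -Δ/4, -Δ/2` and signs `+, -, -, +`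
combine, after scaling by `4/Δ`, into a trapezoid that is `1` on `[-Δ/4, Δ/4]` and `0` outside
`(-Δ/2, Δ/2)`. Placing one such trapezoid at every point of `X`, weighted by the value of `f`
there, gives a network of width `4 |X|`. Since the points of `X` are `Δ`-separated, a point within
`Δ/4` of `x ∈ X` is at distance at least `3Δ/4 ≥ Δ/2` from every other point of `X`, so only the
trapezoid centred at `x` is active there, and it takes the value `1`.
-/

noncomputable def twoLayerReLU {ι δ : Type*} [Fintype ι] (W₁ b₁ : ι → ℝ) (W₂ : δ → ι → ℝ)
    (x : ℝ) : δ → ℝ :=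
  fun j => ∑ i, W₂ j i * max (W₁ i * x + b₁ i) 0

theorem twoLayerReLU_comp_equiv {ι κ δ : Type*} [Fintype ι] [Fintype κ] (e : κ ≃ ι)
    (W₁ b₁ : ι → ℝ) (W₂ : δ → ι → ℝ) :
    twoLayerReLU (W₁ ∘ e) (b₁ ∘ e) (fun j => W₂ j ∘ e) = twoLayerReLU W₁ b₁ W₂ := by
  funext x j
  exact e.sum_comp fun i => W₂ j i * max (W₁ i * x + b₁ i) 0

noncomputable def trapezoid (Δ t : ℝ) : ℝ :=
  4 / Δ * (max (t + Δ / 2) 0 - max (t + Δ / 4) 0 - max (t - Δ / 4) 0 + max (t - Δ / 2) 0)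

theorem trapezoid_eq_one {Δ t : ℝ} (hΔ : 0 < Δ) (ht : |t| ≤ Δ / 4) : trapezoid Δ t = 1 := by
  rw [abs_le] at ht
  rw [trapezoid, max_eq_left (by linarith), max_eq_left (by linarith),
    max_eq_right (by linarith), max_eq_right (by linarith)]
  field_simp
  ring

theorem trapezoid_eq_zero {Δ t : ℝ} (hΔ : 0 ≤ Δ) (ht : Δ / 2 ≤ |t|) : trapezoid Δ t = 0 := by
  rw [trapezoid, mul_eq_zero]
  right
  rcases le_abs.mp ht with ht | ht
  · rw [max_eq_left (by linarith), max_eq_left (by linarith), max_eq_left (by linarith),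
      max_eq_left (by linarith)]
    ring
  · rw [max_eq_right (by linarith), max_eq_right (by linarith), max_eq_right (by linarith),
      max_eq_right (by linarith)]
    ring

theorem twoLayerReLU_eq_sum_trapezoid {δ : Type*} (Δ : ℝ) (X : Finset ℝ) (f : ℝ → δ → ℝ) :
    twoLayerReLU (fun _ : Fin 4 × X => 1) (fun p => ![Δ / 2, Δ / 4, -(Δ / 4), -(Δ / 2)] p.1 - p.2)
        (fun j p => 4 / Δ * ![1, -1, -1, 1] p.1 * f p.2 j) =
      fun y => ∑ c ∈ X, trapezoid Δ (y - c) • f c := by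
  funext y j
  simp only [twoLayerReLU, Fintype.sum_prod_type_right, Fin.sum_univ_four, Finset.sum_apply,
    Pi.smul_apply, smul_eq_mul, trapezoid, ← Finset.sum_coe_sort X]
  refine Fintype.sum_congr _ _ fun c => ?_
  simp only [Matrix.cons_val]
  ring_nf

theorem exists_twoLayerReLU_eq_sum_trapezoid {δ : Type*} (Δ : ℝ) (X : Finset ℝ)
    (f : ℝ → δ → ℝ) :
    ∃ (W₁ b₁ : Fin (4 * X.card) → ℝ) (W₂ : δ → Fin (4 * X.card) → ℝ),
      twoLayerReLU W₁ b₁ W₂ = fun y => ∑ c ∈ X, trapezoid Δ (y - c) • f c := by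
  let e : Fin (4 * X.card) ≃ Fin 4 × X := (Fintype.equivFinOfCardEq (by simp)).symm
  exact ⟨_, _, _, (twoLayerReLU_comp_equiv e _ _ _).trans (twoLayerReLU_eq_sum_trapezoid Δ X f)⟩

theorem sum_trapezoid_smul_eq {E : Type*} [AddCommGroup E] [Module ℝ E] {X : Finset ℝ} {Δ : ℝ}
    (hΔ : 0 < Δ) (hsep : ∀ x ∈ X, ∀ x' ∈ X, x ≠ x' → Δ ≤ |x - x'|) {x ξ : ℝ} (hx : x ∈ X)
    (hξ : |ξ| ≤ Δ / 4) (f : ℝ → E) :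
    ∑ c ∈ X, trapezoid Δ (x + ξ - c) • f c = f x := by
  rw [Finset.sum_eq_single_of_mem x hx, add_sub_cancel_left, trapezoid_eq_one hΔ hξ, one_smul]
  intro c hc hcx
  have hfar : Δ / 2 ≤ |x + ξ - c| := by
    have hxc := hsep x hx c hc (Ne.symm hcx)
    have htri := abs_sub_le x (x + ξ) c
    rw [sub_add_cancel_left, abs_neg] at htri
    linarith
  rw [trapezoid_eq_zero hΔ.le hfar, zero_smul]

theorem two_layer_relu_interpolation (d : ℕ) (X : Finset ℝ) (Δ : ℝ) (hΔ : 0 < Δ)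
    (hsep : ∀ x ∈ X, ∀ x' ∈ X, x ≠ x' → Δ ≤ |x - x'|)
    (f : ℝ → (Fin d → ℝ)) :
    ∃ (W₁ : Fin (4 * X.card) → ℝ) (b₁ : Fin (4 * X.card) → ℝ)
      (W₂ : Fin d → Fin (4 * X.card) → ℝ),
      ∀ x ∈ X, ∀ ξ : ℝ, |ξ| ≤ Δ / 4 →
        (fun j => ∑ i, W₂ j i * max (W₁ i * (x + ξ) + b₁ i) 0) = f x := by
  obtain ⟨W₁, b₁, W₂, hnet⟩ := exists_twoLayerReLU_eq_sum_trapezoid Δ X f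
  refine ⟨W₁, b₁, W₂, fun x hx ξ hξ => ?_⟩
  exact (congrFun hnet (x + ξ)).trans (sum_trapezoid_smul_eq hΔ hsep hx hξ f)
end
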